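/- Let q ≥ 2 be an integer, let γ > 0, and let L = {(t, γt) : t ∈ ℝ} be the line through the origin of slope γ. Then the one-dimensional Lebesgue measure of {t ∈ ℝ : (t, γt) ∈ G_qⁿ} tends to 0 as n → ∞; consequently the one-dimensional Lebesgue measure of {t ∈ ℝ : (t, γt) ∈ G_q} equals 0. -/

import Mathlib

open MeasureTheory Filter

/-- The closed triangle `E` with vertices `(0,0)`, `(1,0)`, `(0,1)`. -/
def E : Set (ℝ × ℝ) := {p : ℝ × ℝ | 0 ≤ p.1 ∧ 0 ≤ p.2 ∧ p.1 + p.2 ≤ 1}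

/-- The contraction `f_{i,j}(p) = p/q + (i/q, j/q)`. -/
noncomputable def fq (q i j : ℕ) (p : ℝ × ℝ) : ℝ × ℝ :=
  (p.1 / q + i / q, p.2 / q + j / q)

/-- The approximations `G_qⁿ` to the generalized Sierpinski gasket:
`G_q⁰ = E` and `G_q^{n+1} = ⋃_{i+j ≤ q-1} f_{i,j}(G_qⁿ)`. -/
noncomputable def Gq (q : ℕ) : ℕ → Set (ℝ × ℝ)
  | 0 => E
  | n + 1 => ⋃ (ij : ℕ × ℕ) (_ : ij.1 + ij.2 ≤ q - 1), fq q ij.1 ij.2 '' Gq q n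

/-!
A point `(x, y)` of `G_q^{k+1}` satisfies `fract (q^k x) + fract (q^k y) ≤ 1`. Along the line
`y = γ x` this inequality fails on a subinterval of length `δ q^{-k}` in every interval of length
`2 q^{-k}`, where `δ = min γ 1 / (2 (1 + γ))`. So no point of the line is a density point of its
intersection with `G_q`, which is therefore null by the Lebesgue density theorem; the slices of
the decreasing compact sets `G_qⁿ` have finite measure and their measures tend to that of the
intersection.
-/

open Set Metric Topology

section Density

variable {β : Type*} [MetricSpace β] [MeasurableSpace β] [BorelSpace β]
  [SecondCountableTopology β] [HasBesicovitchCovering β]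

theorem measure_eq_zero_of_frequently_measure_inter_closedBall_le (μ : Measure β)
    [IsLocallyFiniteMeasure μ] {s : Set β} {c : ENNReal} (hc : c < 1)
    (h : ∀ x, ∃ᶠ r in 𝓝[>] 0, μ (s ∩ closedBall x r) ≤ c * μ (closedBall x r)) :
    μ s = 0 := by
  have hnot : ∀ x, ¬ Tendsto (fun r => μ (s ∩ closedBall x r) / μ (closedBall x r))
      (𝓝[>] 0) (𝓝 1) := fun x hx =>
    let ⟨_, hle, hlt⟩ := ((h x).and_eventually (hx.eventually (lt_mem_nhds hc))).exists
    (ENNReal.div_le_of_le_mul hle).not_gt hlt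
  simpa [hnot] using ae_iff.1 (Besicovitch.ae_tendsto_measure_inter_div μ s)

end Density

theorem Real.volume_inter_closedBall_le_of_disjoint_Ioo {S : Set ℝ} {x r a b ε : ℝ}
    (hr : 0 ≤ r) (hε : 0 ≤ ε) (hsub : Ioo a b ⊆ closedBall x r) (hdisj : Disjoint S (Ioo a b))
    (hlen : ε * r ≤ b - a) :
    volume (S ∩ closedBall x r) ≤ ENNReal.ofReal (1 - ε / 2) * volume (closedBall x r) := by
  have hab : 0 ≤ b - a := le_trans (by positivity) hlen
  calc volume (S ∩ closedBall x r)
      ≤ volume (closedBall x r \ Ioo a b) :=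
        measure_mono fun t ⟨htS, htB⟩ => ⟨htB, fun htJ => hdisj.ne_of_mem htS htJ rfl⟩
    _ = ENNReal.ofReal (2 * r - (b - a)) := by
        rw [measure_sdiff hsub measurableSet_Ioo.nullMeasurableSet (by simp),
          Real.volume_closedBall, Real.volume_Ioo, ENNReal.ofReal_sub _ hab]
    _ ≤ ENNReal.ofReal ((1 - ε / 2) * (2 * r)) := ENNReal.ofReal_le_ofReal (by linarith)
    _ = ENNReal.ofReal (1 - ε / 2) * volume (closedBall x r) := by
        rw [ENNReal.ofReal_mul' (by positivity), Real.volume_closedBall]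

section Holes

variable {γ d s : ℝ} {K : ℤ}

theorem exists_Ioo_one_lt_add_fract_of_le_half (hγ : 0 < γ) (hK : γ * s + d = K)
    (hs : s ≤ 1 / 2) (hs' : γ * (1 - s) < 1) :
    ∃ a b, 0 ≤ a ∧ b ≤ 1 ∧ γ / (2 * (1 + γ)) ≤ b - a ∧
      ∀ v ∈ Ioo a b, 1 < v + Int.fract (γ * v + d) := by
  refine ⟨(1 + γ / 2) / (1 + γ), 1, by positivity, le_rfl, le_of_eq (by field_simp; ring), ?_⟩
  rintro v ⟨hav, hv1⟩
  rw [div_lt_iff₀ (by positivity)] at hav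
  have hfract : Int.fract (γ * v + d) = γ * (v - s) := by
    rw [show γ * v + d = K + γ * (v - s) by linear_combination hK, Int.fract_intCast_add,
      Int.fract_eq_self]
    constructor <;> nlinarith
  rw [hfract]
  nlinarith

theorem exists_Ioo_one_lt_add_fract_of_half_lt (hγ : 0 < γ) (hK : γ * s + d = K)
    (hs : 1 / 2 < s) (hs' : s ≤ 1) :
    ∃ a b, 0 ≤ a ∧ b ≤ 1 ∧ 1 / (2 * (1 + γ)) ≤ b - a ∧
      ∀ v ∈ Ioo a b, 1 < v + Int.fract (γ * v + d) := by
  have hη : 1 / (2 * (1 + γ)) ≤ 1 / 2 := by gcongr; linarith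
  refine ⟨s - 1 / (2 * (1 + γ)), s, by linarith, hs', by linarith, ?_⟩
  rintro v ⟨hsv, hvs⟩
  have hγη : γ * (1 / (2 * (1 + γ))) < 1 := by
    rw [mul_one_div, div_lt_one (by positivity)]; linarith
  have hη' : (1 + γ) * (1 / (2 * (1 + γ))) = 1 / 2 := by field_simp
  have hfract : Int.fract (γ * v + d) = 1 + γ * (v - s) := by
    rw [show γ * v + d = ↑(K - 1) + (1 + γ * (v - s)) by push_cast; linear_combination hK,
      Int.fract_intCast_add, Int.fract_eq_self]
    constructor <;> nlinarith
  rw [hfract]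
  nlinarith

end Holes

/-- The hole sits next to the last point `s ≤ 1` where `γ * s + d` is an integer: after it if
`s ≤ 1 / 2`, before it otherwise. -/
theorem exists_Ioo_one_lt_add_fract {γ : ℝ} (hγ : 0 < γ) (d : ℝ) :
    ∃ a b, 0 ≤ a ∧ b ≤ 1 ∧ min γ 1 / (2 * (1 + γ)) ≤ b - a ∧
      ∀ v ∈ Ioo a b, 1 < v + Int.fract (γ * v + d) := by
  set K := ⌊γ + d⌋
  have hK : γ * ((K - d) / γ) + d = K := by field_simp; ring
  have hK₁ : (K : ℝ) ≤ γ + d := Int.floor_le _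
  have hK₂ : γ + d < K + 1 := Int.lt_floor_add_one _
  rcases le_or_gt ((K - d) / γ) (1 / 2) with hs | hs
  · obtain ⟨a, b, ha, hb, hlen, hv⟩ := exists_Ioo_one_lt_add_fract_of_le_half hγ hK hs
      (by rw [mul_sub, mul_one]; linarith)
    exact ⟨a, b, ha, hb, le_trans (by gcongr; exact min_le_left _ _) hlen, hv⟩
  · obtain ⟨a, b, ha, hb, hlen, hv⟩ := exists_Ioo_one_lt_add_fract_of_half_lt hγ hK hs
      (by rw [div_le_one hγ]; linarith)
    exact ⟨a, b, ha, hb, le_trans (by gcongr; exact min_le_right _ _) hlen, hv⟩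

theorem exists_Ioo_subset_closedBall_one_lt_fract_add_fract {γ P : ℝ} (hγ : 0 < γ) (hP : 0 < P)
    (x : ℝ) :
    ∃ a b, Ioo a b ⊆ closedBall x P⁻¹ ∧ min γ 1 / (2 * (1 + γ)) * P⁻¹ ≤ b - a ∧
      ∀ t ∈ Ioo a b, 1 < Int.fract (P * t) + Int.fract (P * (γ * t)) := by
  set m := ⌊x * P⌋
  have hm₁ : (m : ℝ) ≤ x * P := Int.floor_le _
  have hm₂ : x * P < m + 1 := Int.lt_floor_add_one _
  obtain ⟨a, b, ha, hb, hlen, hv⟩ := exists_Ioo_one_lt_add_fract hγ (γ * m)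
  refine ⟨(m + a) / P, (m + b) / P, ?_, ?_, ?_⟩
  · have hleft : x - P⁻¹ ≤ (m + a) / P := by
      rw [le_div_iff₀ hP, sub_mul, inv_mul_cancel₀ hP.ne']; linarith
    have hright : (m + b) / P ≤ x + P⁻¹ := by
      rw [div_le_iff₀ hP, add_mul, inv_mul_cancel₀ hP.ne']; linarith
    rw [Real.closedBall_eq_Icc]
    exact Ioo_subset_Icc_self.trans (Icc_subset_Icc hleft hright)
  · rw [← sub_div, div_eq_mul_inv _ P]
    gcongr
    linarith
  · rintro t ⟨hat, htb⟩
    rw [div_lt_iff₀ hP] at hat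
    rw [lt_div_iff₀ hP] at htb
    have hfract : Int.fract (P * t) = P * t - m := by
      rw [Int.fract_eq_iff]
      exact ⟨by linarith, by linarith, ⟨m, by ring⟩⟩
    rw [hfract, show P * (γ * t) = γ * (P * t - m) + γ * m by ring]
    exact hv _ ⟨by linarith, by linarith⟩

theorem Int.fract_le_self_of_nonneg {R : Type*} [Ring R] [LinearOrder R] [IsStrictOrderedRing R]
    [FloorRing R] {x : R} (hx : 0 ≤ x) : Int.fract x ≤ x := by
  rw [Int.fract, sub_le_self_iff]
  exact_mod_cast Int.floor_nonneg.mpr hx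

section Gasket

variable {q : ℕ}

theorem fq_mem_E (hq : 0 < q) {i j : ℕ} (hij : i + j ≤ q - 1) {p : ℝ × ℝ} (hp : p ∈ E) :
    fq q i j p ∈ E := by
  obtain ⟨h₁, h₂, h₃⟩ := hp
  have hij' : (i : ℝ) + j ≤ q - 1 := by
    rw [← Nat.cast_one, ← Nat.cast_sub hq]; exact_mod_cast hij
  refine ⟨by unfold fq; positivity, by unfold fq; positivity, ?_⟩
  rw [show (fq q i j p).1 + (fq q i j p).2 = (p.1 + p.2 + (i + j)) / q by simp only [fq]; ring,
    div_le_one (by positivity)]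
  linarith

theorem Gq_succ_subset (hq : 0 < q) (n : ℕ) : Gq q (n + 1) ⊆ Gq q n := by
  induction n with
  | zero =>
    simp only [Gq, iUnion_subset_iff]
    rintro ij hij _ ⟨p, hp, rfl⟩
    exact fq_mem_E hq hij hp
  | succ n ih =>
    simp only [Gq] at ih ⊢
    exact iUnion₂_mono fun ij _ => image_mono ih

theorem Gq_antitone (hq : 0 < q) : Antitone (Gq q) :=
  antitone_nat_of_succ_le (Gq_succ_subset hq)

theorem isCompact_E : IsCompact E := by
  refine Metric.isCompact_of_isClosed_isBounded ?_ ?_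
  · exact (isClosed_le continuous_const continuous_fst).inter
      ((isClosed_le continuous_const continuous_snd).inter
        (isClosed_le (continuous_fst.add continuous_snd) continuous_const))
  · refine (Metric.isBounded_Icc ((0 : ℝ), (0 : ℝ)) (1, 1)).subset ?_
    rintro p ⟨h₁, h₂, h₃⟩
    exact ⟨⟨h₁, h₂⟩, ⟨by simp only; linarith, by simp only; linarith⟩⟩

theorem isCompact_Gq (q n : ℕ) : IsCompact (Gq q n) := by
  induction n with
  | zero => exact isCompact_E
  | succ n ih =>
    have hfin : {ij : ℕ × ℕ | ij.1 + ij.2 ≤ q - 1}.Finite :=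
      (finite_Iic (q - 1, q - 1)).subset fun ij (h : ij.1 + ij.2 ≤ q - 1) => ⟨by omega, by omega⟩
    exact hfin.isCompact_biUnion fun ij _ => ih.image (by unfold fq; fun_prop)

/-- Blowing `G_q^{k+1}` up by `q^k` lands in translates of `E` by `ℕ²`. -/
theorem fract_add_fract_le_one_of_mem_Gq (hq : 0 < q) (k : ℕ) {p : ℝ × ℝ}
    (hp : p ∈ Gq q (k + 1)) : Int.fract ((q : ℝ) ^ k * p.1) + Int.fract ((q : ℝ) ^ k * p.2) ≤ 1 := by
  induction k generalizing p with
  | zero =>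
    obtain ⟨h₁, h₂, h₃⟩ := Gq_succ_subset hq 0 hp
    simp only [pow_zero, one_mul]
    linarith [Int.fract_le_self_of_nonneg h₁, Int.fract_le_self_of_nonneg h₂]
  | succ k ih =>
    simp only [Gq, mem_iUnion] at hp
    obtain ⟨⟨i, j⟩, -, p, hp, rfl⟩ := hp
    have hq' : (q : ℝ) ≠ 0 := by positivity
    rw [show (q : ℝ) ^ (k + 1) * (fq q i j p).1 = (q : ℝ) ^ k * p.1 + (q ^ k * i : ℕ) by
        simp only [fq]; push_cast; field_simp; ring,
      show (q : ℝ) ^ (k + 1) * (fq q i j p).2 = (q : ℝ) ^ k * p.2 + (q ^ k * j : ℕ) by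
        simp only [fq]; push_cast; field_simp; ring,
      Int.fract_add_natCast, Int.fract_add_natCast]
    exact ih hp

end Gasket

theorem volume_line_inter_iInter_Gq {q : ℕ} (hq : 2 ≤ q) {γ : ℝ} (hγ : 0 < γ) :
    volume {t : ℝ | (t, γ * t) ∈ ⋂ n : ℕ, Gq q n} = 0 := by
  set δ := min γ 1 / (2 * (1 + γ))
  have hδ : 0 < δ := by positivity
  have hfract : ∀ t ∈ {t : ℝ | (t, γ * t) ∈ ⋂ n : ℕ, Gq q n}, ∀ k : ℕ,
      Int.fract ((q : ℝ) ^ k * t) + Int.fract ((q : ℝ) ^ k * (γ * t)) ≤ 1 := fun t ht k =>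
    fract_add_fract_le_one_of_mem_Gq (by omega) k (mem_iInter.mp ht (k + 1))
  have hradii : Tendsto (fun k : ℕ => ((q : ℝ) ^ k)⁻¹) atTop (𝓝[>] 0) :=
    tendsto_nhdsWithin_iff.mpr ⟨tendsto_inv_atTop_zero.comp
      (tendsto_pow_atTop_atTop_of_one_lt (by exact_mod_cast hq)),
      Eventually.of_forall fun k => by simp only [mem_Ioi]; positivity⟩
  refine measure_eq_zero_of_frequently_measure_inter_closedBall_le volume
    (ENNReal.ofReal_lt_one.mpr (by linarith : 1 - δ / 2 < 1)) fun x =>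
      hradii.frequently (Frequently.of_forall fun k => ?_)
  obtain ⟨a, b, hsub, hlen, hhole⟩ :=
    exists_Ioo_subset_closedBall_one_lt_fract_add_fract hγ (by positivity : 0 < (q : ℝ) ^ k) x
  exact Real.volume_inter_closedBall_le_of_disjoint_Ioo (by positivity) hδ.le hsub
    (disjoint_left.mpr fun t ht htJ => (hhole t htJ).not_ge (hfract t ht k)) hlen

theorem stmt3 (q : ℕ) (hq : 2 ≤ q) (γ : ℝ) (hγ : 0 < γ) :
    Tendsto (fun n : ℕ => volume {t : ℝ | (t, γ * t) ∈ Gq q n}) atTop (nhds 0) ∧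
    volume {t : ℝ | (t, γ * t) ∈ ⋂ n : ℕ, Gq q n} = 0 := by
  have hzero := volume_line_inter_iInter_Gq hq hγ
  refine ⟨?_, hzero⟩
  have hline : Continuous fun t : ℝ => (t, γ * t) := by fun_prop
  have hfinite : volume {t : ℝ | (t, γ * t) ∈ Gq q 0} ≠ ⊤ := by
    refine ne_top_of_le_ne_top (by simp : volume (Icc (0 : ℝ) 1) ≠ ⊤) (measure_mono ?_)
    rintro t ⟨h₁, h₂, h₃⟩
    exact ⟨h₁, by nlinarith⟩
  rw [← hzero, show {t : ℝ | (t, γ * t) ∈ ⋂ n : ℕ, Gq q n} = ⋂ n, {t | (t, γ * t) ∈ Gq q n} by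
    ext; simp]
  exact tendsto_measure_iInter_atTop
    (fun n => ((isCompact_Gq q n).isClosed.preimage hline).measurableSet.nullMeasurableSet)
    (fun _ _ hmn => preimage_mono (Gq_antitone (by omega) hmn)) ⟨0, hfinite⟩
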